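/- arXiv:1509.07567 — 8 statements merged into one kernel-verified Lean document; each statement's English description precedes it below -/
import Mathlib

section
/- If G = (V, →) is a majority digraph, i.e., there exist finite sets A_v for v ∈ V such that for distinct u, v we have u → v if and only if |A_u ∩ A_v| > (1/2)·|A_u|, then G has no one-way cycle: there is no sequence of distinct-edge steps v_1 → v_2 → ⋯ → v_n = v_1 with n ≥ 2 such that v_{i+1} ↛ v_i for all 1 ≤ i < n. -/
/-!
Along every edge `u → v` of a majority digraph whose reverse is absent we have
`|A_u| < |A_v|`, because `|A_u ∩ A_v|` exceeds half of `|A_u|` but not half of `|A_v|`.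
So `v ↦ |A_v|` strictly increases along a one-way cycle, which is absurd once the cycle closes.
-/

/-- A one-way cycle: a directed cycle `v 0 → v 1 → ⋯ → v n = v 0` (with at least one edge)
such that no reverse edge is present. -/
def HasOneWayCycle {V : Type*} (E : V → V → Prop) : Prop :=
  ∃ (n : ℕ) (v : ℕ → V), 1 ≤ n ∧ v n = v 0 ∧
    ∀ i < n, E (v i) (v (i + 1)) ∧ ¬ E (v (i + 1)) (v i)

theorem not_hasOneWayCycle_of_lt {V β : Type*} [Preorder β] {E : V → V → Prop} (f : V → β)
    (hf : ∀ u v, E u v → ¬ E v u → f u < f v) : ¬ HasOneWayCycle E := by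
  rintro ⟨n, v, hn, hvn, hcycle⟩
  have hmono : StrictMonoOn (f ∘ v) (Set.Iic n) :=
    strictMonoOn_Iic_of_lt_succ fun i hi => hf _ _ (hcycle i hi).1 (hcycle i hi).2
  have hlt : f (v 0) < f (v n) := hmono (Set.mem_Iic.2 (Nat.zero_le n)) Set.self_mem_Iic hn
  exact hlt.ne (congrArg f hvn.symm)

theorem Finset.card_lt_card_of_half_lt_card_inter {α : Type*} [DecidableEq α] {s t : Finset α}
    (hs : (1 / 2 : ℝ) * s.card < (s ∩ t).card) (ht : ((t ∩ s).card : ℝ) ≤ (1 / 2 : ℝ) * t.card) :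
    s.card < t.card := by
  rw [Finset.inter_comm] at ht
  exact_mod_cast (by linarith : (s.card : ℝ) < t.card)

theorem stmt_0_general {V : Type*} (E : V → V → Prop)
    (A : V → Finset ℕ)
    (hmaj : ∀ u v : V, u ≠ v →
      (E u v ↔ ((A u ∩ A v).card : ℝ) > (1 / 2 : ℝ) * (A u).card)) :
    ¬ HasOneWayCycle E := by
  refine not_hasOneWayCycle_of_lt (fun v => (A v).card) fun u v huv hvu => ?_
  have hne : u ≠ v := by
    rintro rfl
    exact hvu huv
  exact Finset.card_lt_card_of_half_lt_card_inter ((hmaj u v hne).1 huv)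
    (not_lt.1 (mt (hmaj v u hne.symm).2 hvu))

/-- A majority digraph has no one-way cycle. -/
theorem stmt_0 {V : Type*} [Fintype V] (E : V → V → Prop)
    (hirr : Irreflexive E)
    (A : V → Finset ℕ)
    (hmaj : ∀ u v : V, u ≠ v →
      (E u v ↔ ((A u ∩ A v).card : ℝ) > (1 / 2 : ℝ) * (A u).card)) :
    ¬ HasOneWayCycle E :=
  stmt_0_general E A hmaj
end

section
/- If G = (V, →) is a proportionality α-digraph for some real α ∈ (0,1), then every directed cycle in G has a reversal; equivalently, G has no one-way cycle. -/
theorem Finset.card_lt_card_of_mul_card_lt_card_inter {ι : Type*} [DecidableEq ι]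
    {s t : Finset ι} {α : ℝ} (hα : 0 < α) (hst : α * s.card < (s ∩ t).card)
    (hts : ((t ∩ s).card : ℝ) ≤ α * t.card) : s.card < t.card := by
  rw [Finset.inter_comm] at hts
  exact_mod_cast lt_of_mul_lt_mul_left (hst.trans_le hts) hα.le

theorem stmt_1_general {V : Type*} (E : V → V → Prop)
    (hirr : Irreflexive E) (α : ℝ) (hα0 : 0 < α)
    (A : V → Finset ℕ)
    (hprop : ∀ u v : V, u ≠ v →
      (E u v ↔ ((A u ∩ A v).card : ℝ) > α * (A u).card)) :
    ¬ HasOneWayCycle E := by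
  refine not_hasOneWayCycle_of_lt (fun v ↦ (A v).card) fun u v huv hvu ↦ ?_
  have hne : u ≠ v := fun h ↦ hirr u (h ▸ huv)
  exact Finset.card_lt_card_of_mul_card_lt_card_inter hα0 ((hprop u v hne).1 huv)
    (not_lt.1 fun h ↦ hvu ((hprop v u hne.symm).2 h))

/-- A proportionality α-digraph (α ∈ (0,1)) has no one-way cycle. -/
theorem stmt_1 {V : Type*} [Fintype V] (E : V → V → Prop)
    (hirr : Irreflexive E) (α : ℝ) (hα0 : 0 < α) (hα1 : α < 1)
    (A : V → Finset ℕ)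
    (hprop : ∀ u v : V, u ≠ v →
      (E u v ↔ ((A u ∩ A v).card : ℝ) > α * (A u).card)) :
    ¬ HasOneWayCycle E :=
  stmt_1_general E hirr α hα0 A hprop
end

section
/- A finite digraph G on n vertices has no one-way cycle if and only if G is isomorphic to G_{S,T} for some appropriate pair (S,T), where (S,T) is appropriate if S is a set of unordered pairs {i,j} from {1,…,n}, T is a set of ordered pairs (i,j) from {1,…,n} with i < j, and (i,j) ∈ T implies {i,j} ∉ S; and G_{S,T} has vertex set {1,…,n} with i → j iff {i,j} ∈ S or (i,j) ∈ T. -/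
/-!
A one-way cycle of `E` is exactly a cycle of the relation `OneWay E`. If there is none, the
transitive closure of `OneWay E` is a strict order; numbering the vertices along a linear
extension of it makes every one-way edge point upwards, so `S` collects the two-way edges and
`T` the one-way ones. Conversely, in `G_{S,T}` every one-way edge lies in `T`, so the labels
strictly increase along a one-way cycle, which is absurd.
-/

open Relation

def OneWay {V : Type*} (E : V → V → Prop) (u v : V) : Prop :=
  E u v ∧ ¬ E v u

theorem Relation.transGen_iff_exists_seq {V : Type*} {r : V → V → Prop} {x y : V} :
    TransGen r x y ↔
      ∃ (m : ℕ) (v : ℕ → V), 1 ≤ m ∧ v 0 = x ∧ v m = y ∧ ∀ i < m, r (v i) (v (i + 1)) := by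
  constructor
  · intro h
    induction h with
    | @single b hxb =>
      refine ⟨1, fun i => if i = 0 then x else b, le_rfl, rfl, rfl, fun i hi => ?_⟩
      obtain rfl : i = 0 := by omega
      simpa using hxb
    | @tail b c _ hbc ih =>
      obtain ⟨m, v, hm, hv0, hvm, hstep⟩ := ih
      refine ⟨m + 1, fun i => if i ≤ m then v i else c, by omega, by simp [hv0], by simp, ?_⟩
      intro i hi
      rcases Nat.lt_succ_iff_lt_or_eq.mp hi with hlt | rfl
      · simpa [hlt.le, Nat.succ_le_of_lt hlt] using hstep i hlt
      · simpa [hvm] using hbc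
  · rintro ⟨m, v, hm, rfl, rfl, hstep⟩
    have reach : ∀ k, 1 ≤ k → k ≤ m → TransGen r (v 0) (v k) := by
      intro k hk hkm
      induction k, hk using Nat.le_induction with
      | base => exact .single (hstep 0 (by omega))
      | succ k _ ih => exact (ih (by omega)).tail (hstep k (by omega))
    exact reach m hm le_rfl

theorem hasOneWayCycle_iff_exists_transGen {V : Type*} {E : V → V → Prop} :
    HasOneWayCycle E ↔ ∃ x, TransGen (OneWay E) x x := by
  simp only [transGen_iff_exists_seq]
  constructor
  · rintro ⟨m, v, hm, hvm, hstep⟩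
    exact ⟨v 0, m, v, hm, rfl, hvm, hstep⟩
  · rintro ⟨x, m, v, hm, hv0, hvm, hstep⟩
    exact ⟨m, v, hm, hvm.trans hv0.symm, hstep⟩

theorem not_hasOneWayCycle_of_oneWay_lt {V α : Type*} [Preorder α] {E : V → V → Prop}
    (f : V → α) (hf : ∀ u v, OneWay E u v → f u < f v) : ¬ HasOneWayCycle E := by
  intro h
  obtain ⟨x, hx⟩ := hasOneWayCycle_iff_exists_transGen.mp h
  have hlt : ∀ {u v}, TransGen (OneWay E) u v → f u < f v := fun h =>
    TransGen.trans_induction_on h (hf _ _) (fun _ _ => lt_trans)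
  exact lt_irrefl _ (hlt hx)

theorem exists_equiv_fin_lt_of_acyclic {V : Type*} [Fintype V] {n : ℕ}
    (hn : Fintype.card V = n) {r : V → V → Prop} (hr : ∀ x, ¬ TransGen r x x) :
    ∃ e : V ≃ Fin n, ∀ u v, r u v → e u < e v := by
  have : IsStrictOrder V (TransGen r) := { irrefl := hr, trans := fun _ _ _ => .trans }
  let := partialOrderOfSO (TransGen r)
  let : Fintype (LinearExtension V) := ‹Fintype V›
  let e := (monoEquivOfFin (LinearExtension V) hn).symm
  have hmono : StrictMono (toLinearExtension (α := V)) :=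
    toLinearExtension.monotone.strictMono_of_injective fun _ _ h => h
  exact ⟨e.toEquiv, fun u v huv => e.strictMono (hmono (TransGen.single huv))⟩

theorem exists_appropriate_of_oneWay_lt {α : Type*} [LinearOrder α] {F : α → α → Prop}
    (hirr : ∀ i, ¬ F i i) (hF : ∀ i j, OneWay F i j → i < j) :
    ∃ (S : Set (Sym2 α)) (T : Set (α × α)),
      (∀ p ∈ S, ¬ p.IsDiag) ∧ (∀ p ∈ T, p.1 < p.2) ∧ (∀ p ∈ T, s(p.1, p.2) ∉ S) ∧
      ∀ i j, F i j ↔ (s(i, j) ∈ S ∨ (i, j) ∈ T) := by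
  refine ⟨Sym2.fromRel (r := fun i j => F i j ∧ F j i) ⟨fun _ _ h => h.symm⟩,
    {p | OneWay F p.1 p.2}, ?_, fun p hp => hF _ _ hp, ?_, ?_⟩
  · intro p hp
    induction p using Sym2.ind with
    | _ i j =>
      rw [Sym2.fromRel_prop] at hp
      rw [Sym2.mk_isDiag_iff]
      rintro rfl
      exact hirr _ hp.1
  · rintro ⟨i, j⟩ hp hS
    exact hp.2 (Sym2.fromRel_prop.mp hS).2
  · intro i j
    simp only [Sym2.fromRel_prop, Set.mem_ofPred_eq, OneWay]
    tauto

/-- A finite digraph on `n` vertices has no one-way cycle iff it is isomorphic to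
`G_{S,T}` for some appropriate pair `(S, T)`. -/
theorem stmt_3 {V : Type*} [Fintype V] (n : ℕ) (hn : Fintype.card V = n)
    (E : V → V → Prop) (hirr : Irreflexive E) :
    ¬ HasOneWayCycle E ↔
      ∃ (S : Set (Sym2 (Fin n))) (T : Set (Fin n × Fin n)),
        (∀ p ∈ S, ¬ p.IsDiag) ∧
        (∀ p ∈ T, p.1 < p.2) ∧
        (∀ p ∈ T, s(p.1, p.2) ∉ S) ∧
        ∃ e : V ≃ Fin n, ∀ u v : V, E u v ↔ (s(e u, e v) ∈ S ∨ (e u, e v) ∈ T) := by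
  constructor
  · intro hacyc
    obtain ⟨e, he⟩ := exists_equiv_fin_lt_of_acyclic hn (r := OneWay E) fun x hx =>
      hacyc (hasOneWayCycle_iff_exists_transGen.mpr ⟨x, hx⟩)
    obtain ⟨S, T, hSdiag, hTlt, hTS, hST⟩ :=
      exists_appropriate_of_oneWay_lt (F := fun i j => E (e.symm i) (e.symm j))
        (fun i => hirr _) fun i j hij => by simpa using he _ _ hij
    exact ⟨S, T, hSdiag, hTlt, hTS, e, fun u v => by simpa using hST (e u) (e v)⟩
  · rintro ⟨S, T, -, hTlt, -, e, he⟩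
    refine not_hasOneWayCycle_of_oneWay_lt e fun u v ⟨huv, hvu⟩ => ?_
    rcases (he u v).mp huv with hS | hT
    · exact absurd ((he v u).mpr (.inl (Sym2.eq_swap ▸ hS))) hvu
    · exact hTlt _ hT
end

section
/- Let G be a finite digraph on n vertices with no one-way cycle, and let p < q be positive natural numbers. Then G is a proportionality p/q-digraph: there exist finite sets A_v for the vertices v of G such that for distinct u, v: u → v iff q·|A_u ∩ A_v| > p·|A_u|. -/
/-!
Rank the vertices by `r`, strictly increasing along one-way edges; this is possible because the
one-way edges have no cycle. Give every set `A_u` exactly `q (N + r u)` elements and let any two of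
them share `p N + m {u, v}` elements, for a symmetric weight `m` and a large `N`. Then
`q |A_u ∩ A_v| > p |A_u|` says exactly `m {u, v} > p r u`, and `m` is easily chosen to make this
equivalent to `u → v`. Such a family exists for `N ≥ ∑ m`: a common core of `p N` elements, a block
of `m {u, v}` elements for every pair, and private elements filling `A_u` up to its size.
-/

open Finset

theorem Finset.disjSum_inter_disjSum {α β : Type*} [DecidableEq α] [DecidableEq β]
    (s s' : Finset α) (t t' : Finset β) :
    s.disjSum t ∩ s'.disjSum t' = (s ∩ s').disjSum (t ∩ t') := by
  ext (x | x) <;> simp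

theorem Relation.TransGen.exists_path {V : Type*} {R : V → V → Prop} {a b : V}
    (h : Relation.TransGen R a b) :
    ∃ (n : ℕ) (f : ℕ → V), 1 ≤ n ∧ f 0 = a ∧ f n = b ∧ ∀ i < n, R (f i) (f (i + 1)) := by
  induction h with
  | single hab => exact ⟨1, fun i => if i = 0 then a else _, le_rfl, rfl, rfl, by simpa⟩
  | @tail c d _ hcd ih =>
    obtain ⟨n, f, hn, hf0, hfn, hf⟩ := ih
    refine ⟨n + 1, fun i => if i ≤ n then f i else d, by omega, by simpa, by simp, ?_⟩
    intro i hi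
    rcases Nat.lt_or_ge i n with hin | hin
    · simpa [hin.le, Nat.succ_le_of_lt hin] using hf i hin
    · obtain rfl : i = n := by omega
      simpa [hfn] using hcd

section OneWay

variable {V : Type*} {E : V → V → Prop}

theorem not_transGen_oneWay_self (hnc : ¬ HasOneWayCycle E) (v : V) :
    ¬ Relation.TransGen (fun u w => E u w ∧ ¬ E w u) v v := by
  intro hv
  obtain ⟨n, f, hn, hf0, hfn, hf⟩ := hv.exists_path
  exact hnc ⟨n, f, hn, hfn.trans hf0.symm, hf⟩

/-- The rank of `v` counts the vertices from which a one-way path leads to `v`. -/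
theorem exists_rank_lt_of_oneWay [Fintype V] (hnc : ¬ HasOneWayCycle E) :
    ∃ r : V → ℕ, ∀ u v, E u v → ¬ E v u → r u < r v := by
  classical
  set R := Relation.TransGen fun u w => E u w ∧ ¬ E w u
  refine ⟨fun v => #{u | R u v}, fun u v huv hvu => card_lt_card ?_⟩
  refine ssubset_iff_of_subset (fun w hw => ?_) |>.mpr ⟨u, ?_, ?_⟩
  · simp only [mem_filter, mem_univ, true_and] at hw ⊢
    exact hw.tail ⟨huv, hvu⟩
  · simpa using Relation.TransGen.single ⟨huv, hvu⟩
  · simpa using not_transGen_oneWay_self hnc u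

end OneWay

section SetFamilies

variable {V : Type*}

theorem exists_nat_family_card_eq [DecidableEq V] {α : Type*} [DecidableEq α] [Countable α]
    (A : V → Finset α) :
    ∃ B : V → Finset ℕ, (∀ v, #(B v) = #(A v)) ∧ ∀ u v, #(B u ∩ B v) = #(A u ∩ A v) := by
  obtain ⟨f, hf⟩ := Countable.exists_injective_nat α
  refine ⟨fun v => (A v).map ⟨f, hf⟩, fun v => card_map _, fun u v => ?_⟩
  rw [← map_inter, card_map]

variable [Fintype V] [DecidableEq V]

def pairBlocks (m : Sym2 V → ℕ) (v : V) : Finset (Σ _ : Sym2 V, ℕ) :=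
  ({z | v ∈ z} : Finset (Sym2 V)).sigma fun z => range (m z)

theorem card_pairBlocks_le (m : Sym2 V → ℕ) (v : V) : #(pairBlocks m v) ≤ ∑ z, m z := by
  rw [pairBlocks, card_sigma]
  simpa using sum_le_sum_of_subset (f := m) (subset_univ {z | v ∈ z})

theorem card_pairBlocks_inter (m : Sym2 V → ℕ) {u v : V} (h : u ≠ v) :
    #(pairBlocks m u ∩ pairBlocks m v) = m s(u, v) := by
  have : pairBlocks m u ∩ pairBlocks m v = ({s(u, v)} : Finset _).sigma fun z => range (m z) := by
    ext ⟨z, i⟩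
    simp [pairBlocks, ← Sym2.mem_and_mem_iff h, and_assoc, and_left_comm]
  simp [this]

theorem exists_family_card_inter_eq (c : ℕ) (m : Sym2 V → ℕ) (s : V → ℕ)
    (hs : ∀ v, c + ∑ z, m z ≤ s v) :
    ∃ A : V → Finset ℕ, (∀ v, #(A v) = s v) ∧ ∀ u v, u ≠ v → #(A u ∩ A v) = c + m s(u, v) := by
  set B := fun v => (range c).disjSum (pairBlocks m v)
  set A := fun v => (B v).disjSum ({v} ×ˢ range (s v - #(B v)))
  obtain ⟨A', hA'card, hA'inter⟩ := exists_nat_family_card_eq A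
  refine ⟨A', fun v => ?_, fun u v huv => ?_⟩
  · have hblocks := card_pairBlocks_le m v
    have hsv := hs v
    simp only [hA'card, A, B, card_disjSum, card_product, card_singleton, card_range]
    omega
  · have hpriv : Disjoint ({u} ×ˢ range (s u - #(B u))) ({v} ×ˢ range (s v - #(B v))) :=
      disjoint_product.mpr (.inl (disjoint_singleton.mpr huv))
    rw [hA'inter, disjSum_inter_disjSum, disjSum_inter_disjSum,
      disjoint_iff_inter_eq_empty.mp hpriv, card_disjSum, card_disjSum, inter_self, card_range,
      card_pairBlocks_inter m huv, card_empty, add_zero]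

end SetFamilies

theorem exists_weight_lt_iff {V : Type*} (E : V → V → Prop) {p : ℕ} (hp : 0 < p) (r : V → ℕ)
    (hr : ∀ u v, E u v → ¬ E v u → r u < r v) :
    ∃ m : Sym2 V → ℕ, ∀ u v, E u v ↔ p * r u < m s(u, v) := by
  classical
  set f := fun u v => if E u v then p * r u + 1 else 0
  refine ⟨Sym2.lift ⟨fun u v => f u v + f v u, fun _ _ => add_comm _ _⟩, fun u v => ?_⟩
  by_cases huv : E u v
  · simp only [f, huv, Sym2.lift_mk, if_true, true_iff]
    omega
  by_cases hvu : E v u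
  · have := Nat.mul_lt_mul_of_pos_left (hr v u hvu huv) hp
    simp only [f, huv, hvu, Sym2.lift_mk, if_true, if_false, false_iff, not_lt]
    omega
  · simp [f, huv, hvu]

theorem stmt_6_general {V : Type*} [Fintype V] (E : V → V → Prop)
    (hnc : ¬ HasOneWayCycle E)
    (p q : ℕ) (hp : 0 < p) (hpq : p < q) :
    ∃ A : V → Finset ℕ, ∀ u v : V, u ≠ v →
      (E u v ↔ q * (A u ∩ A v).card > p * (A u).card) := by
  classical
  obtain ⟨r, hr⟩ := exists_rank_lt_of_oneWay hnc
  obtain ⟨m, hm⟩ := exists_weight_lt_iff E hp r hr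
  set N := ∑ z, m z
  have hsize : ∀ v, p * N + N ≤ q * (N + r v) := fun v =>
    calc p * N + N = (p + 1) * N := by ring
      _ ≤ q * (N + r v) := Nat.mul_le_mul hpq (Nat.le_add_right _ _)
  obtain ⟨A, hcard, hinter⟩ := exists_family_card_inter_eq (p * N) m (fun v => q * (N + r v)) hsize
  refine ⟨A, fun u v huv => ?_⟩
  have hexpand : p * (q * (N + r u)) = q * (p * N) + q * (p * r u) := by ring
  rw [hcard, hinter u v huv, hm, gt_iff_lt, hexpand, mul_add, Nat.add_lt_add_iff_left,
    Nat.mul_lt_mul_left (hp.trans hpq)]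

/-- Every finite digraph with no one-way cycle is a proportionality `p/q`-digraph. -/
theorem stmt_6 {V : Type*} [Fintype V] (E : V → V → Prop)
    (hirr : Irreflexive E) (hnc : ¬ HasOneWayCycle E)
    (p q : ℕ) (hp : 0 < p) (hpq : p < q) :
    ∃ A : V → Finset ℕ, ∀ u v : V, u ≠ v →
      (E u v ↔ q * (A u ∩ A v).card > p * (A u).card) :=
  stmt_6_general E hnc p q hp hpq
end

section
/- Every finite digraph with no one-way cycle is a majority digraph: there exist finite sets A_v for the vertices such that for distinct u, v, we have u → v iff 2·|A_u ∩ A_v| > |A_u|. -/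
/-!
The one-way edges `u → v` (with `v ↛ u`) form an acyclic relation, so some rank `r : V → ℕ`
increases strictly along them. Give every vertex a set of size `2g + 2 r u + 1`, where the sets
share a common block of size `g` and, for `u ≠ v`, meet in `g + x(u,v)` elements with
`x(u,v) = [u → v] (r u + 1) + [v → u] (r v + 1)`. Then `u → v` iff `x(u,v) > r u`: for a one-way
edge `v → u` the rank inequality `r v < r u` keeps `x(u,v) = r v + 1` at most `r u`.
Such sets exist because any symmetric pattern of pairwise intersections can be realized by
disjoint blocks plus private padding, provided each prescribed size dominates the row sum of `x`.
-/

open Finset Relation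

section Acyclic

variable {V : Type*} {R : V → V → Prop}

theorem Relation.TransGen.exists_seq {a b : V} (h : TransGen R a b) :
    ∃ (n : ℕ) (f : ℕ → V), 1 ≤ n ∧ f 0 = a ∧ f n = b ∧ ∀ i < n, R (f i) (f (i + 1)) := by
  induction h with
  | @single c hac => exact ⟨1, fun i => if i = 0 then a else c, le_rfl, rfl, rfl, by simpa⟩
  | @tail b c _ hbc ih =>
    obtain ⟨n, f, -, hf0, hfn, hf⟩ := ih
    refine ⟨n + 1, fun i => if i ≤ n then f i else c, by omega, by simp [hf0], by simp, ?_⟩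
    intro i hi
    rcases Nat.lt_or_ge i n with hin | hin
    · simpa [hin.le, Nat.succ_le_of_lt hin] using hf i hin
    · obtain rfl : i = n := by omega
      simpa [hfn] using hbc

theorem exists_rank_of_acyclic [Finite V] (hR : ∀ u, ¬TransGen R u u) :
    ∃ r : V → ℕ, ∀ u v, R u v → r u < r v := by
  classical
  have := Fintype.ofFinite V
  refine ⟨fun u => #{w | TransGen R w u}, fun u v huv => card_lt_card ?_⟩
  refine (ssubset_iff_of_subset fun w => ?_).2 ⟨u, ?_, ?_⟩
  · simpa using fun hwu => hwu.tail huv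
  · simpa using TransGen.single huv
  · simpa using hR u

theorem not_transGen_oneWay_self_s7 {E : V → V → Prop} (hE : ¬HasOneWayCycle E) (u : V) :
    ¬TransGen (fun a b => E a b ∧ ¬E b a) u u := fun h =>
  let ⟨n, f, hn, hf0, hfn, hf⟩ := h.exists_seq
  hE ⟨n, f, hn, hfn.trans hf0.symm, hf⟩

end Acyclic

section Realization

theorem exists_card_inter_eq_sum {ι V : Type*} [Countable ι] [DecidableEq ι]
    (w : ι → ℕ) (L : V → Finset ι) :
    ∃ A : V → Finset ℕ, ∀ u v, #(A u ∩ A v) = ∑ i ∈ L u ∩ L v, w i := by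
  obtain ⟨f, hf⟩ := exists_injective_nat (Σ _ : ι, ℕ)
  refine ⟨fun u => ((L u).sigma fun i => range (w i)).map ⟨f, hf⟩, fun u v => ?_⟩
  have hsigma : ((L u).sigma fun i => range (w i)) ∩ (L v).sigma (fun i => range (w i)) =
      (L u ∩ L v).sigma fun i => range (w i) := by
    ext ⟨i, k⟩
    simp only [mem_inter, mem_sigma]
    tauto
  rw [← map_inter, card_map, hsigma, card_sigma]
  simp

variable {V : Type*} [Fintype V] [DecidableEq V]

theorem exists_card_eq_card_inter_eq (g : ℕ) (x : V → V → ℕ) (hx : ∀ u v, x u v = x v u)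
    (c : V → ℕ) (hc : ∀ u, ∑ v ∈ univ.erase u, x u v ≤ c u) :
    ∃ A : V → Finset ℕ, ∀ u, #(A u) = g + c u ∧ ∀ v, u ≠ v → #(A u ∩ A v) = g + x u v := by
  -- labels: `none` for the common block, `s(u, v)` for the block shared by `u` and `v`,
  -- and the diagonal `s(u, u)` for the padding private to `u`
  let y : V → V → ℕ := fun a b => if a = b then c a - ∑ v ∈ univ.erase a, x a v else x a b
  have hy : ∀ a b, y a b = y b a := by
    intro a b
    by_cases hab : a = b
    · subst hab; rfl
    · simp [y, hab, Ne.symm hab, hx a b]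
  let L : V → Finset (Option (Sym2 V)) := fun u => insert none (univ.image fun v => some s(u, v))
  obtain ⟨A, hA⟩ := exists_card_inter_eq_sum (fun o => o.elim g (Sym2.lift ⟨y, hy⟩)) L
  have hinj : ∀ u : V, Function.Injective fun v => some s(u, v) := fun u _ _ hab =>
    Sym2.congr_right.mp (Option.some_injective _ hab)
  refine ⟨A, fun u => ⟨?_, fun v huv => ?_⟩⟩
  · have hpad : y u u + ∑ v ∈ univ.erase u, y u v = c u := by
      rw [sum_congr rfl fun v hv => if_neg (Ne.symm (ne_of_mem_erase hv))]
      simp only [y, if_true]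
      exact Nat.sub_add_cancel (hc u)
    rw [← inter_self (A u), hA, inter_self, sum_insert (by simp), sum_image (hinj u).injOn,
      ← add_sum_erase _ _ (mem_univ u)]
    simpa using congrArg (g + ·) hpad
  · have hLL : L u ∩ L v = {none, some s(u, v)} := by
      ext (_ | z)
      · simp [L]
      · simp only [L, mem_inter, mem_insert, mem_image, mem_univ, true_and, reduceCtorEq,
          false_or, Option.some.injEq, mem_singleton]
        rw [← Sym2.mem_and_mem_iff huv]
        simp only [Sym2.mem_iff_exists, eq_comm]
    rw [hA, hLL, sum_pair (by simp)]
    simp [y, huv]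

end Realization

theorem rel_iff_lt_add {V : Type*} {E : V → V → Prop} [DecidableRel E] {r : V → ℕ}
    (hr : ∀ u v, E u v ∧ ¬E v u → r u < r v) (u v : V) :
    E u v ↔ r u < (if E u v then r u + 1 else 0) + (if E v u then r v + 1 else 0) := by
  by_cases huv : E u v
  · simp only [huv, if_true, true_iff]
    omega
  · simp only [huv, if_false, false_iff, zero_add, not_lt]
    split_ifs with hvu
    · exact hr v u ⟨hvu, huv⟩
    · exact Nat.zero_le _

theorem stmt_7_general {V : Type*} [Fintype V] (E : V → V → Prop)
    (hnc : ¬ HasOneWayCycle E) :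
    ∃ A : V → Finset ℕ, ∀ u v : V, u ≠ v →
      (E u v ↔ 2 * (A u ∩ A v).card > (A u).card) := by
  classical
  obtain ⟨r, hr⟩ := exists_rank_of_acyclic (not_transGen_oneWay_self_s7 hnc)
  let ω : V → V → ℕ := fun u v => if E u v then r u + 1 else 0
  let g := ∑ u, ∑ v, (ω u v + ω v u)
  have hrow : ∀ u, ∑ v ∈ univ.erase u, (ω u v + ω v u) ≤ g := fun u =>
    (sum_le_sum_of_subset (erase_subset u univ)).trans
      (single_le_sum (f := fun u => ∑ v, (ω u v + ω v u)) (fun _ _ => Nat.zero_le _) (mem_univ u))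
  obtain ⟨A, hA⟩ := exists_card_eq_card_inter_eq g (fun u v => ω u v + ω v u)
    (fun u v => add_comm _ _) (fun u => g + 2 * r u + 1) fun u => (hrow u).trans (by omega)
  refine ⟨A, fun u v huv => ?_⟩
  rw [(hA u).2 v huv, (hA u).1, rel_iff_lt_add (fun u v => hr u v) u v]
  dsimp only [ω]
  omega

/-- Every finite digraph with no one-way cycle is a majority digraph. -/
theorem stmt_7 {V : Type*} [Fintype V] (E : V → V → Prop)
    (hirr : Irreflexive E) (hnc : ¬ HasOneWayCycle E) :
    ∃ A : V → Finset ℕ, ∀ u v : V, u ≠ v →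
      (E u v ↔ 2 * (A u ∩ A v).card > (A u).card) :=
  stmt_7_general E hnc
end

section
/- Let G be a finite digraph on vertices {1,…,n}, α ∈ (0,1), and let f be a function from subsets of {1,…,n} to positive reals with f*(I) = Σ_{J ⊇ I} f(J). Suppose for all distinct vertices i, j: if i → j then f*({i,j}) > α·f*({i}), and if i ↛ j then f*({i,j}) < α·f*({i}). Then G is a proportionality α-digraph: there exist finite sets A_1,…,A_n such that i → j iff |A_i ∩ A_j| > α·|A_i| for all distinct i, j. -/
/-!
Approximate `f` by the integer weights `m J = ⌊N f(J)⌋` and realize them by a Venn diagram: put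
`m J` fresh points into the region of each `J` and let `A i` consist of the points of the regions
`J ∋ i`. Then `|A i| = m*({i})` and `|A i ∩ A j| = m*({i, j})`, and both differ from `N f*` by at
most the number `2 ^ n` of regions. Every gap `f*({i, j}) - α f*({i})` is nonzero, so for `N` large
the resulting error `(1 + |α|) 2 ^ n` cannot change the sign of `N` times the gap.
-/

open Finset Filter

section

variable {ι : Type*} [Fintype ι] [DecidableEq ι]

/-- The paper's `g*`. -/
def supersetSum {M : Type*} [AddCommMonoid M] (g : Finset ι → M) (I : Finset ι) : M :=
  ∑ J ∈ univ.filter (fun J => I ⊆ J), g J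

/-- A point `⟨J, k⟩` is the `k`-th of the `m J` points placed in the Venn region of `J`; those
lying in every set `i ∈ I` form `vennRegion m I`. -/
def vennRegion (m : Finset ι → ℕ) (I : Finset ι) : Finset (Σ J : Finset ι, Fin (m J)) :=
  univ.filter (fun x => I ⊆ x.1)

theorem card_vennRegion (m : Finset ι → ℕ) (I : Finset ι) :
    (vennRegion m I).card = supersetSum m I := by
  rw [vennRegion, card_filter, ← univ_sigma_univ, sum_sigma, supersetSum, sum_filter]
  refine sum_congr rfl fun J _ => ?_
  split_ifs <;> simp

theorem vennRegion_inter (m : Finset ι → ℕ) (I K : Finset ι) :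
    vennRegion m I ∩ vennRegion m K = vennRegion m (I ∪ K) := by
  ext x
  simp [vennRegion, union_subset_iff]

theorem exists_card_eq_supersetSum (m : Finset ι → ℕ) :
    ∃ A : ι → Finset ℕ, ∀ i j,
      (A i).card = supersetSum m {i} ∧ (A i ∩ A j).card = supersetSum m {i, j} := by
  obtain ⟨e, he⟩ := exists_injective_nat (Σ J : Finset ι, Fin (m J))
  refine ⟨fun i => (vennRegion m {i}).map ⟨e, he⟩, fun i j => ⟨?_, ?_⟩⟩
  · rw [card_map, card_vennRegion]
  · rw [← map_inter, vennRegion_inter, card_map, card_vennRegion]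
    rfl

theorem abs_supersetSum_floor_sub_le {x : Finset ι → ℝ} (hx : ∀ J, 0 ≤ x J) (I : Finset ι) :
    |((supersetSum (fun J => ⌊x J⌋₊) I : ℕ) : ℝ) - supersetSum x I| ≤ 2 ^ Fintype.card ι := by
  have hfloor : ∀ J, 0 ≤ x J - ⌊x J⌋₊ ∧ x J - ⌊x J⌋₊ ≤ 1 := fun J =>
    ⟨sub_nonneg.2 (Nat.floor_le (hx J)), by linarith [Nat.lt_floor_add_one (x J)]⟩
  rw [abs_sub_comm, supersetSum, supersetSum, Nat.cast_sum, ← sum_sub_distrib,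
    abs_of_nonneg (sum_nonneg fun J _ => (hfloor J).1)]
  calc ∑ J ∈ univ.filter (fun J => I ⊆ J), (x J - ⌊x J⌋₊)
      ≤ (univ.filter (fun J => I ⊆ J)).card • (1 : ℝ) :=
        sum_le_card_nsmul _ _ _ fun J _ => (hfloor J).2
    _ ≤ 2 ^ Fintype.card ι := by
        rw [nsmul_one]
        exact_mod_cast (card_le_univ _).trans_eq Fintype.card_finset

end

theorem pos_iff_pos_of_abs_sub_mul_lt {a b c : ℝ} (h : |a - c * b| < c * |b|) :
    0 < a ↔ 0 < b := by
  have hc : 0 < c := pos_of_mul_pos_left ((abs_nonneg _).trans_lt h) (abs_nonneg b)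
  obtain ⟨hlo, hhi⟩ := abs_lt.1 h
  rcases abs_cases b with ⟨hb, hb0⟩ | ⟨hb, hb0⟩ <;> rw [hb] at hlo hhi <;>
    constructor <;> intro <;> nlinarith

theorem exists_finset_nat_lt_card_inter_iff {ι : Type*} [Fintype ι] [DecidableEq ι]
    (g : Finset ι → ℝ) (hg : ∀ J, 0 ≤ g J) (α : ℝ) :
    ∃ A : ι → Finset ℕ, ∀ i j, supersetSum g {i, j} ≠ α * supersetSum g {i} →
      (α * supersetSum g {i} < supersetSum g {i, j} ↔
        α * (A i).card < (A i ∩ A j).card) := by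
  set err : ℝ := 2 ^ Fintype.card ι
  obtain ⟨N, hN⟩ : ∃ N : ℕ, ∀ p : ι × ι,
      supersetSum g {p.1, p.2} ≠ α * supersetSum g {p.1} →
        (1 + |α|) * err < N * |supersetSum g {p.1, p.2} - α * supersetSum g {p.1}| :=
    (eventually_all.2 fun p => eventually_imp_distrib_left.2 fun hgap =>
      (tendsto_natCast_atTop_atTop.atTop_mul_const
        (abs_pos.2 (sub_ne_zero.2 hgap))).eventually_gt_atTop _).exists
  obtain ⟨A, hA⟩ := exists_card_eq_supersetSum (fun J => ⌊N * g J⌋₊)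
  refine ⟨A, fun i j hgap => ?_⟩
  obtain ⟨hAi, hAij⟩ := hA i j
  have hscale : ∀ I, supersetSum (fun J => N * g J) I = N * supersetSum g I := fun I =>
    (mul_sum _ _ _).symm
  have hi := abs_supersetSum_floor_sub_le (fun J => mul_nonneg N.cast_nonneg (hg J)) {i}
  have hij := abs_supersetSum_floor_sub_le (fun J => mul_nonneg N.cast_nonneg (hg J)) {i, j}
  rw [hscale, ← hAi] at hi
  rw [hscale, ← hAij] at hij
  rw [← sub_pos, ← sub_pos (b := α * _)]
  refine (pos_iff_pos_of_abs_sub_mul_lt (c := N) ?_).symm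
  calc |((A i ∩ A j).card - α * (A i).card : ℝ)
        - N * (supersetSum g {i, j} - α * supersetSum g {i})|
      = |((A i ∩ A j).card - N * supersetSum g {i, j})
          - α * ((A i).card - N * supersetSum g {i})| := by congr 1; ring
    _ ≤ |((A i ∩ A j).card - N * supersetSum g {i, j} : ℝ)|
          + |α| * |((A i).card - N * supersetSum g {i} : ℝ)| := by
        rw [← abs_mul]; exact abs_sub _ _
    _ ≤ (1 + |α|) * err := by nlinarith [abs_nonneg α]
    _ < N * |supersetSum g {i, j} - α * supersetSum g {i}| := hN (i, j) hgap

theorem stmt_10_general (n : ℕ) (E : Fin n → Fin n → Prop)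
    (α : ℝ)
    (f : Finset (Fin n) → ℝ) (hfpos : ∀ I, 0 < f I)
    (fstar : Finset (Fin n) → ℝ)
    (hfstar : ∀ I, fstar I = ∑ J ∈ Finset.univ.filter (fun J => I ⊆ J), f J)
    (h1 : ∀ i j : Fin n, i ≠ j → E i j → fstar {i, j} > α * fstar {i})
    (h2 : ∀ i j : Fin n, i ≠ j → ¬ E i j → fstar {i, j} < α * fstar {i}) :
    ∃ A : Fin n → Finset ℕ, ∀ i j : Fin n, i ≠ j →
      (E i j ↔ ((A i ∩ A j).card : ℝ) > α * (A i).card) := by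
  obtain rfl : fstar = supersetSum f := funext hfstar
  obtain ⟨A, hA⟩ := exists_finset_nat_lt_card_inter_iff f (fun J => (hfpos J).le) α
  refine ⟨A, fun i j hij => ?_⟩
  by_cases hE : E i j
  · have hgt := h1 i j hij hE
    exact iff_of_true hE ((hA i j hgt.ne').1 hgt)
  · have hlt := h2 i j hij hE
    exact iff_of_false hE fun hcard => hlt.not_gt ((hA i j hlt.ne).2 hcard)

/-- If a size function `f` witnesses the edge relation via `f*`, then `G` is a
proportionality α-digraph. -/
theorem stmt_10 (n : ℕ) (E : Fin n → Fin n → Prop)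
    (α : ℝ) (hα0 : 0 < α) (hα1 : α < 1)
    (f : Finset (Fin n) → ℝ) (hfpos : ∀ I, 0 < f I)
    (fstar : Finset (Fin n) → ℝ)
    (hfstar : ∀ I, fstar I = ∑ J ∈ Finset.univ.filter (fun J => I ⊆ J), f J)
    (h1 : ∀ i j : Fin n, i ≠ j → E i j → fstar {i, j} > α * fstar {i})
    (h2 : ∀ i j : Fin n, i ≠ j → ¬ E i j → fstar {i, j} < α * fstar {i}) :
    ∃ A : Fin n → Finset ℕ, ∀ i j : Fin n, i ≠ j →
      (E i j ↔ ((A i ∩ A j).card : ℝ) > α * (A i).card) :=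
  stmt_10_general n E α f hfpos fstar hfstar h1 h2
end

section
/- Let A_u = {0,1,2,3,4,5}, A_v = {0,1,2,3,6,7,8,9}, A_w = {0,1,2,6,7}. With α = 0.5 and β = 0.99, for each ordered pair (X,Y) ∈ {(u,v),(v,w),(w,u)} we have α·|A_X| < |A_X ∩ A_Y| < β·|A_X|, while for each reversed pair (v,u),(w,v),(u,w) this condition fails. Hence the one-way 3-cycle u → v → w → u is (α,β)-proportional even though it has a one-way cycle. -/
/-!
The condition is measured relative to the first set, so it is not symmetric. The three
intersections have sizes 4, 5, 3; along the cycle they are the fractions 4/6, 5/8, 3/5 of the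
first set, strictly between 1/2 and 99/100, while in reverse they are 4/8 = 1/2, 5/5 and 3/6 = 1/2,
on or beyond the boundary.
-/

open Finset

def ProportionalPair {ι : Type*} [DecidableEq ι] (α β : ℝ) (A B : Finset ι) : Prop :=
  α * #A < #(A ∩ B) ∧ (#(A ∩ B) : ℝ) < β * #A

theorem Fin.eq_add_one_iff_of_oneWayCycle {α : Type*} (R : α → α → Prop) {a b c : α}
    (hab : R a b) (hbc : R b c) (hca : R c a) (hba : ¬ R b a) (hcb : ¬ R c b) (hac : ¬ R a c)
    (i j : Fin 3) (hij : i ≠ j) : j = i + 1 ↔ R (![a, b, c] i) (![a, b, c] j) := by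
  fin_cases i <;> fin_cases j <;> simp_all

/-- The one-way 3-cycle `u → v → w → u` is (1/2, 99/100)-proportional, witnessed by the
explicit sets `A_u = {0,…,5}`, `A_v = {0,1,2,3,6,7,8,9}`, `A_w = {0,1,2,6,7}`. -/
theorem stmt_14 (Au Av Aw : Finset ℕ)
    (hu : Au = {0, 1, 2, 3, 4, 5})
    (hv : Av = {0, 1, 2, 3, 6, 7, 8, 9})
    (hw : Aw = {0, 1, 2, 6, 7}) :
    -- the three cycle edges satisfy the (α,β)-condition
    ((1/2 : ℝ) * Au.card < ((Au ∩ Av).card : ℝ) ∧ ((Au ∩ Av).card : ℝ) < (99/100 : ℝ) * Au.card) ∧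
    ((1/2 : ℝ) * Av.card < ((Av ∩ Aw).card : ℝ) ∧ ((Av ∩ Aw).card : ℝ) < (99/100 : ℝ) * Av.card) ∧
    ((1/2 : ℝ) * Aw.card < ((Aw ∩ Au).card : ℝ) ∧ ((Aw ∩ Au).card : ℝ) < (99/100 : ℝ) * Aw.card) ∧
    -- the three reversed pairs fail it
    ¬ ((1/2 : ℝ) * Av.card < ((Av ∩ Au).card : ℝ) ∧ ((Av ∩ Au).card : ℝ) < (99/100 : ℝ) * Av.card) ∧
    ¬ ((1/2 : ℝ) * Aw.card < ((Aw ∩ Av).card : ℝ) ∧ ((Aw ∩ Av).card : ℝ) < (99/100 : ℝ) * Aw.card) ∧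
    ¬ ((1/2 : ℝ) * Au.card < ((Au ∩ Aw).card : ℝ) ∧ ((Au ∩ Aw).card : ℝ) < (99/100 : ℝ) * Au.card) ∧
    -- hence the one-way 3-cycle is (1/2, 99/100)-proportional
    (∃ A : Fin 3 → Finset ℕ, ∀ i j : Fin 3, i ≠ j →
      (j = i + 1 ↔
        ((1/2 : ℝ) * (A i).card < ((A i ∩ A j).card : ℝ) ∧
          ((A i ∩ A j).card : ℝ) < (99/100 : ℝ) * (A i).card))) := by
  subst hu hv hw
  have huv : ProportionalPair (1/2) (99/100)
      ({0, 1, 2, 3, 4, 5} : Finset ℕ) {0, 1, 2, 3, 6, 7, 8, 9} := by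
    norm_num [ProportionalPair]
  have hvw : ProportionalPair (1/2) (99/100)
      ({0, 1, 2, 3, 6, 7, 8, 9} : Finset ℕ) {0, 1, 2, 6, 7} := by
    norm_num [ProportionalPair]
  have hwu : ProportionalPair (1/2) (99/100)
      ({0, 1, 2, 6, 7} : Finset ℕ) {0, 1, 2, 3, 4, 5} := by
    norm_num [ProportionalPair]
  have hvu : ¬ ProportionalPair (1/2) (99/100)
      ({0, 1, 2, 3, 6, 7, 8, 9} : Finset ℕ) {0, 1, 2, 3, 4, 5} := by
    norm_num [ProportionalPair]
  have hwv : ¬ ProportionalPair (1/2) (99/100)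
      ({0, 1, 2, 6, 7} : Finset ℕ) {0, 1, 2, 3, 6, 7, 8, 9} := by
    norm_num [ProportionalPair]
  have huw : ¬ ProportionalPair (1/2) (99/100)
      ({0, 1, 2, 3, 4, 5} : Finset ℕ) {0, 1, 2, 6, 7} := by
    norm_num [ProportionalPair]
  exact ⟨huv, hvw, hwu, hvu, hwv, huw, _,
    Fin.eq_add_one_iff_of_oneWayCycle (ProportionalPair (1/2) (99/100)) huv hvw hwu hvu hwv huw⟩
end

section
/- Let n ≥ 1, p < q positive integers, and a, m natural numbers satisfying (q−p)·a > q and m·p²·(q−p)^{n−2} > a·p·n. Then for all 1 ≤ i ≤ n: (m·p²·q^{n−2} + a·p·n) / (m·p·q^{n−1} + a·p·n + q·i) > p/q, and subtracting z = m·p²·(q−p)^{n−2} from the numerator makes the ratio strictly less than p/q: (m·p²·q^{n−2} + a·p·n − z) / (m·p·q^{n−1} + a·p·n + q·i) < p/q. -/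
/-!
With `x = m p q^(n-2)` and `A = a p n`, the ratio is `(p x + A) / (q x + A + q i)`, the mediant of
`p x / q x = p / q` and `A / (A + q i)`. It exceeds `p / q` exactly when `A / (A + q i)` does, i.e.
when `(q - p) A > p q i`, which `(q - p) a > q` and `i ≤ n` give. Subtracting `z > A` from the
numerator pushes `q · numerator` below `p q x`, hence the ratio below `p / q`.
-/

section MediantBounds

variable {K : Type*} [Field K] [LinearOrder K] [IsStrictOrderedRing K] {p q x A c z : K}

theorem div_lt_mul_add_div_mul_add_add (hp : 0 ≤ p) (hpq : p < q) (hx : 0 ≤ x) (hc : 0 ≤ c)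
    (h : p * c < (q - p) * A) : p / q < (p * x + A) / (q * x + A + c) := by
  have hq : 0 < q := hp.trans_lt hpq
  have hA : 0 < A := pos_of_mul_pos_right ((mul_nonneg hp hc).trans_lt h) (sub_pos.2 hpq).le
  rw [div_lt_div_iff₀ hq (by positivity)]
  linear_combination h

theorem mul_add_sub_div_mul_add_add_lt_div (hp : 0 ≤ p) (hpq : p < q) (hx : 0 ≤ x)
    (hc : 0 ≤ c) (hA : 0 < A) (hAz : A < z) : (p * x + A - z) / (q * x + A + c) < p / q := by
  have hq : 0 < q := hp.trans_lt hpq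
  rw [div_lt_div_iff₀ (by positivity) hq]
  nlinarith [mul_lt_mul_of_pos_left hAz hq, mul_nonneg hp hA.le, mul_nonneg hp hc]

end MediantBounds

theorem stmt_18_general (n p q a m : ℕ) (hn : 2 ≤ n) (hp : 0 < p) (hpq : p < q)
    (ha : (q - p) * a > q) (hm : m * p ^ 2 * (q - p) ^ (n - 2) > a * p * n)
    (i : ℕ) (hin : i ≤ n) :
    ((m * p ^ 2 * q ^ (n - 2) + a * p * n : ℚ) /
        (m * p * q ^ (n - 1) + a * p * n + q * i) > (p : ℚ) / q) ∧
    ((m * p ^ 2 * q ^ (n - 2) + a * p * n - m * p ^ 2 * (q - p) ^ (n - 2) : ℚ) /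
        (m * p * q ^ (n - 1) + a * p * n + q * i) < (p : ℚ) / q) := by
  have hnum : (m * p ^ 2 * q ^ (n - 2) + a * p * n : ℚ) =
      p * (m * p * q ^ (n - 2)) + a * p * n := by
    ring
  have hden : (m * p * q ^ (n - 1) + a * p * n + q * i : ℚ) =
      q * (m * p * q ^ (n - 2)) + a * p * n + q * i := by
    rw [show n - 1 = n - 2 + 1 by omega, pow_succ]
    ring
  have ha' : (q : ℚ) < (q - p) * a := by
    rw [← Nat.cast_sub hpq.le]; exact_mod_cast ha
  have hm' : (a * p * n : ℚ) < m * p ^ 2 * (q - p) ^ (n - 2) := by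
    rw [← Nat.cast_sub hpq.le]; exact_mod_cast hm
  have hpq' : (p : ℚ) < q := by exact_mod_cast hpq
  have hx : (0 : ℚ) ≤ m * p * q ^ (n - 2) := by positivity
  rw [hnum, hden]
  refine ⟨div_lt_mul_add_div_mul_add_add (Nat.cast_nonneg p) hpq' hx (by positivity) ?_,
    mul_add_sub_div_mul_add_add_lt_div (Nat.cast_nonneg p) hpq' hx (by positivity) ?_ hm'⟩
  · calc (p : ℚ) * (q * i) ≤ q * (p * n) := by
          rw [mul_left_comm]; gcongr
      _ < (q - p) * a * (p * n) := mul_lt_mul_of_pos_right ha' (by positivity)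
      _ = (q - p) * (a * p * n) := by ring
  · have ha0 : (0 : ℚ) < a := pos_of_mul_pos_right ((Nat.cast_nonneg q).trans_lt ha')
      (sub_pos.2 hpq').le
    positivity

theorem stmt_18 (n p q a m : ℕ) (hn : 2 ≤ n) (hp : 0 < p) (hpq : p < q)
    (ha : (q - p) * a > q) (hm : m * p ^ 2 * (q - p) ^ (n - 2) > a * p * n)
    (i : ℕ) (hi1 : 1 ≤ i) (hin : i ≤ n) :
    ((m * p ^ 2 * q ^ (n - 2) + a * p * n : ℚ) /
        (m * p * q ^ (n - 1) + a * p * n + q * i) > (p : ℚ) / q) ∧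
    ((m * p ^ 2 * q ^ (n - 2) + a * p * n - m * p ^ 2 * (q - p) ^ (n - 2) : ℚ) /
        (m * p * q ^ (n - 1) + a * p * n + q * i) < (p : ℚ) / q) :=
  stmt_18_general n p q a m hn hp hpq ha hm i hin
end
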